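/- arXiv:1906.08899 — 4 statements merged into one kernel-verified Lean document; each statement's English description precedes it below -/
import Mathlib

section
/- Let σ ∈ L²(ℝ, γ) satisfy σ(u)² ≤ c₀ exp(c₁u²/2) for some c₁ < 1. Then lim_{t→1} E_G[(σ(tG) − σ(G))/(t − 1)] = λ₂(σ), where λ₂(σ) = E_G[σ(G) He₂(G)] = E_G[σ(G)(G² − 1)] is the second Hermite coefficient of σ and G ∼ N(0,1). -/
/-!
For `t > 0` the substitution `x ↦ t x` gives `E[σ(tG)] = E[σ(G) w_t(G)]` with
`w_t(x) = t⁻¹ exp(x² (1 - t⁻²) / 2)`, so the difference quotient in the statement is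
`E[σ(G) (w_t(G) - w_1(G)) / (t - 1)]`, and `∂ₜ w_t(x)` at `t = 1` is `x² - 1 = He₂(x)`.
On `3/4 ≤ t ≤ 5/4` the mean value theorem bounds the slope of `t ↦ w_t(x)` by
`4 (1 + x²) exp((9/25) x² / 2)`, while `|σ(x)| ≤ √c₀ exp((c₁/2) x² / 2)`; since
`c₁/2 + 9/25 < 1` their product is `γ`-integrable and dominated convergence applies.
-/

open MeasureTheory ProbabilityTheory Real Set Filter Topology

lemma integrable_gaussianReal_of_abs_le {f : ℝ → ℝ} (hf : Measurable f) {K c : ℝ} (hc : c < 1)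
    (hbound : ∀ x, |f x| ≤ K * (1 + x ^ 2) * exp (c * x ^ 2 / 2)) :
    Integrable f (gaussianReal 0 1) := by
  rw [gaussianReal_of_var_ne_zero _ one_ne_zero, integrable_withDensity_iff
    (measurable_gaussianPDF 0 1) (ae_of_all _ fun _ => gaussianPDF_lt_top)]
  simp only [toReal_gaussianPDF]
  have hb : 0 < (1 - c) / 2 := by linarith
  have hpoly : Integrable (fun x : ℝ => K * (1 + x ^ 2) * exp (-((1 - c) / 2) * x ^ 2)) := by
    have hsq : Integrable (fun x : ℝ => x ^ 2 * exp (-((1 - c) / 2) * x ^ 2)) := by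
      simpa using integrable_rpow_mul_exp_neg_mul_sq hb (s := 2) (by norm_num)
    refine (((integrable_exp_neg_mul_sq hb).add hsq).const_mul K).congr (ae_of_all _ fun x => ?_)
    simp only [Pi.add_apply]
    ring
  refine hpoly.mono' (hf.mul (measurable_gaussianPDFReal 0 1)).aestronglyMeasurable
    (ae_of_all _ fun x => ?_)
  have hpdf : gaussianPDFReal 0 1 x ≤ exp (-x ^ 2 / 2) := by
    rw [gaussianPDFReal]
    refine (mul_le_of_le_one_left (exp_pos _).le (inv_le_one_of_one_le₀ ?_)).trans_eq (by simp)
    exact one_le_sqrt.2 (by simp only [NNReal.coe_one]; nlinarith [pi_gt_three])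
  calc ‖f x * gaussianPDFReal 0 1 x‖ = |f x| * gaussianPDFReal 0 1 x := by
        rw [norm_mul, norm_of_nonneg (gaussianPDFReal_nonneg 0 1 x), norm_eq_abs]
    _ ≤ K * (1 + x ^ 2) * exp (c * x ^ 2 / 2) * exp (-x ^ 2 / 2) :=
        mul_le_mul (hbound x) hpdf (gaussianPDFReal_nonneg 0 1 x)
          ((abs_nonneg _).trans (hbound x))
    _ = K * (1 + x ^ 2) * exp (-((1 - c) / 2) * x ^ 2) := by
        rw [mul_assoc, ← exp_add]; ring_nf

/-- The density of the law of `t • G` with respect to that of `G ∼ 𝒩(0, 1)`. -/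
noncomputable def dilationDensity (t x : ℝ) : ℝ :=
  t⁻¹ * exp (x ^ 2 * (1 - t⁻¹ ^ 2) / 2)

lemma integral_comp_mul_gaussianReal (σ : ℝ → ℝ) {t : ℝ} (ht : 0 < t) :
    ∫ x, σ (t * x) ∂gaussianReal 0 1 = ∫ x, σ x * dilationDensity t x ∂gaussianReal 0 1 := by
  simp only [integral_gaussianReal_eq_integral_smul one_ne_zero, smul_eq_mul]
  have hpdf : ∀ x,
      gaussianPDFReal 0 1 (t⁻¹ * x) = gaussianPDFReal 0 1 x * (t * dilationDensity t x) := by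
    intro x
    simp only [gaussianPDFReal, dilationDensity, NNReal.coe_one, mul_one, sub_zero,
      mul_inv_cancel_left₀ ht.ne']
    rw [mul_assoc, ← exp_add]
    ring_nf
  calc ∫ x, gaussianPDFReal 0 1 x * σ (t * x)
      = ∫ x, gaussianPDFReal 0 1 (t⁻¹ * (t * x)) * σ (t * x) := by
        simp only [inv_mul_cancel_left₀ ht.ne']
    _ = t⁻¹ * ∫ x, gaussianPDFReal 0 1 (t⁻¹ * x) * σ x := by
        rw [Measure.integral_comp_mul_left (fun x => gaussianPDFReal 0 1 (t⁻¹ * x) * σ x) t,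
          abs_of_pos (inv_pos.2 ht), smul_eq_mul]
    _ = ∫ x, gaussianPDFReal 0 1 x * (σ x * dilationDensity t x) := by
        rw [← integral_const_mul]
        congr 1; ext x
        rw [hpdf]; field_simp

lemma dilationDensity_one (x : ℝ) : dilationDensity 1 x = 1 := by
  simp [dilationDensity]

lemma hasDerivAt_dilationDensity (x : ℝ) {s : ℝ} (hs : s ≠ 0) :
    HasDerivAt (dilationDensity · x) (dilationDensity s x * (x ^ 2 * s⁻¹ ^ 3 - s⁻¹)) s := by
  have hinv : HasDerivAt (fun t : ℝ => t⁻¹) (-(s ^ 2)⁻¹) s := hasDerivAt_inv hs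
  refine (hinv.mul (((hinv.pow 2).const_sub 1).const_mul (x ^ 2) |>.div_const 2).exp).congr_deriv ?_
  simp only [dilationDensity, Pi.pow_apply, Nat.cast_ofNat]
  field_simp
  grind

lemma dilationDensity_nonneg {t : ℝ} (ht : 0 ≤ t) (x : ℝ) : 0 ≤ dilationDensity t x := by
  unfold dilationDensity; positivity

section NearOne

variable {t x : ℝ}

lemma inv_mem_Icc_of_mem_Icc (ht : t ∈ Icc (3 / 4 : ℝ) (5 / 4)) :
    t⁻¹ ∈ Icc (4 / 5 : ℝ) (4 / 3) := by
  obtain ⟨h1, h2⟩ := ht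
  constructor
  · rw [le_inv_comm₀ (by norm_num) (by linarith)]; linarith
  · rw [inv_le_comm₀ (by linarith) (by norm_num)]; linarith

lemma dilationDensity_le (ht : t ∈ Icc (3 / 4 : ℝ) (5 / 4)) (x : ℝ) :
    dilationDensity t x ≤ 4 / 3 * exp (9 / 25 * x ^ 2 / 2) := by
  obtain ⟨h1, h2⟩ := inv_mem_Icc_of_mem_Icc ht
  have hsq : 16 / 25 ≤ t⁻¹ ^ 2 := by nlinarith
  exact mul_le_mul h2 (exp_le_exp.2 (by nlinarith [mul_le_mul_of_nonneg_left hsq (sq_nonneg x)]))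
    (exp_pos _).le (by norm_num)

lemma abs_deriv_dilationDensity_le (ht : t ∈ Icc (3 / 4 : ℝ) (5 / 4)) (x : ℝ) :
    |dilationDensity t x * (x ^ 2 * t⁻¹ ^ 3 - t⁻¹)| ≤
      4 * (1 + x ^ 2) * exp (9 / 25 * x ^ 2 / 2) := by
  obtain ⟨h1, h2⟩ := inv_mem_Icc_of_mem_Icc ht
  have hcube : t⁻¹ ^ 3 ≤ (4 / 3) ^ 3 := pow_le_pow_left₀ (by linarith) h2 3
  have hpoly : |x ^ 2 * t⁻¹ ^ 3 - t⁻¹| ≤ 3 * (1 + x ^ 2) := by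
    rw [abs_le]; constructor <;> nlinarith [sq_nonneg x, pow_pos (show 0 < t⁻¹ by linarith) 3]
  rw [abs_mul, abs_of_nonneg (dilationDensity_nonneg (by linarith [ht.1]) x)]
  calc dilationDensity t x * |x ^ 2 * t⁻¹ ^ 3 - t⁻¹|
      ≤ 4 / 3 * exp (9 / 25 * x ^ 2 / 2) * (3 * (1 + x ^ 2)) :=
        mul_le_mul (dilationDensity_le ht x) hpoly (abs_nonneg _) (by positivity)
    _ = 4 * (1 + x ^ 2) * exp (9 / 25 * x ^ 2 / 2) := by ring

lemma abs_slope_dilationDensity_le (ht : t ∈ Icc (3 / 4 : ℝ) (5 / 4)) (x : ℝ) :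
    |slope (dilationDensity · x) 1 t| ≤ 4 * (1 + x ^ 2) * exp (9 / 25 * x ^ 2 / 2) := by
  have hmvt := Convex.norm_image_sub_le_of_norm_hasDerivWithin_le (f := (dilationDensity · x))
    (fun s hs => (hasDerivAt_dilationDensity x (by linarith [hs.1] : s ≠ 0)).hasDerivWithinAt)
    (fun s hs => abs_deriv_dilationDensity_le hs x) (convex_Icc _ _)
    (show (1 : ℝ) ∈ Icc (3 / 4) (5 / 4) by norm_num) ht
  simp only [norm_eq_abs, dilationDensity_one] at hmvt
  rw [slope_def_field, dilationDensity_one, abs_div]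
  exact div_le_of_le_mul₀ (abs_nonneg _) (by positivity) hmvt

end NearOne

lemma abs_le_sqrt_mul_exp_half {y c b : ℝ} (h : y ^ 2 ≤ c * exp b) : |y| ≤ √c * exp (b / 2) := by
  rw [exp_half, ← sqrt_mul' _ (exp_pos b).le]
  exact abs_le_sqrt h

lemma Icc_mem_nhdsNE_one : Icc (3 / 4 : ℝ) (5 / 4) ∈ 𝓝[≠] 1 :=
  mem_nhdsWithin_of_mem_nhds (Icc_mem_nhds (by norm_num) (by norm_num))

section GaussianGrowth

variable {σ : ℝ → ℝ} {A a : ℝ}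

lemma integrable_comp_mul_gaussianReal_of_abs_le (hσm : Measurable σ) (ha : a < 1 / 2)
    (hσ : ∀ u, |σ u| ≤ A * exp (a * u ^ 2 / 2)) {t : ℝ} (ht : t ∈ Icc (3 / 4 : ℝ) (5 / 4)) :
    Integrable (fun x => σ (t * x)) (gaussianReal 0 1) := by
  have hA : 0 ≤ A := by simpa using (abs_nonneg _).trans (hσ 0)
  have hat : a * t ^ 2 < 1 := by nlinarith [ht.1, ht.2, sq_nonneg t]
  refine integrable_gaussianReal_of_abs_le (K := A) (hσm.comp (measurable_const_mul t)) hat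
    fun x => ?_
  calc |σ (t * x)| ≤ A * exp (a * t ^ 2 * x ^ 2 / 2) := by
        simpa only [mul_pow, mul_assoc] using hσ (t * x)
    _ ≤ A * (1 + x ^ 2) * exp (a * t ^ 2 * x ^ 2 / 2) := by
        gcongr; nlinarith [sq_nonneg x]

lemma integrable_dominator_gaussianReal (ha : a < 1 / 2) :
    Integrable (fun x => A * exp (a * x ^ 2 / 2) * (4 * (1 + x ^ 2) * exp (9 / 25 * x ^ 2 / 2)))
      (gaussianReal 0 1) := by
  refine integrable_gaussianReal_of_abs_le (by fun_prop) (c := a + 9 / 25) (K := |4 * A|)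
    (by linarith) fun x => ?_
  refine le_of_eq ?_
  rw [mul_mul_mul_comm, ← exp_add]
  simp only [abs_mul, abs_of_pos (exp_pos _), abs_of_pos (by positivity : (0 : ℝ) < 1 + x ^ 2),
    abs_of_pos (four_pos : (0 : ℝ) < 4)]
  ring_nf

lemma abs_mul_le_dominator (hσ : ∀ u, |σ u| ≤ A * exp (a * u ^ 2 / 2)) {x y : ℝ}
    (hy : |y| ≤ 4 * (1 + x ^ 2) * exp (9 / 25 * x ^ 2 / 2)) :
    ‖σ x * y‖ ≤ A * exp (a * x ^ 2 / 2) * (4 * (1 + x ^ 2) * exp (9 / 25 * x ^ 2 / 2)) := by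
  rw [norm_mul, norm_eq_abs, norm_eq_abs]
  exact mul_le_mul (hσ x) hy (abs_nonneg _) ((abs_nonneg _).trans (hσ x))

lemma integrable_mul_dilationDensity (hσm : Measurable σ) (ha : a < 1 / 2)
    (hσ : ∀ u, |σ u| ≤ A * exp (a * u ^ 2 / 2)) {t : ℝ} (ht : t ∈ Icc (3 / 4 : ℝ) (5 / 4)) :
    Integrable (fun x => σ x * dilationDensity t x) (gaussianReal 0 1) := by
  refine (integrable_dominator_gaussianReal ha).mono'
    (hσm.mul (by unfold dilationDensity; fun_prop)).aestronglyMeasurable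
    (ae_of_all _ fun x => abs_mul_le_dominator hσ ?_)
  rw [abs_of_nonneg (dilationDensity_nonneg (by linarith [ht.1]) x)]
  refine (dilationDensity_le ht x).trans (mul_le_mul_of_nonneg_right ?_ (exp_pos _).le)
  nlinarith [sq_nonneg x]

lemma tendsto_integral_mul_slope_dilationDensity (hσm : Measurable σ) (ha : a < 1 / 2)
    (hσ : ∀ u, |σ u| ≤ A * exp (a * u ^ 2 / 2)) :
    Tendsto (fun t => ∫ x, σ x * slope (dilationDensity · x) 1 t ∂gaussianReal 0 1) (𝓝[≠] 1)
      (𝓝 (∫ x, σ x * (x ^ 2 - 1) ∂gaussianReal 0 1)) := by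
  refine tendsto_integral_filter_of_dominated_convergence
    (fun x => A * exp (a * x ^ 2 / 2) * (4 * (1 + x ^ 2) * exp (9 / 25 * x ^ 2 / 2))) ?_ ?_
    (integrable_dominator_gaussianReal ha) (ae_of_all _ fun x => ?_)
  · exact .of_forall fun t =>
      (hσm.mul (by simp only [slope_def_field, dilationDensity]; fun_prop)).aestronglyMeasurable
  · filter_upwards [Icc_mem_nhdsNE_one] with t ht
    exact ae_of_all _ fun x => abs_mul_le_dominator hσ (abs_slope_dilationDensity_le ht x)
  · have hderiv := hasDerivAt_dilationDensity x one_ne_zero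
    simp only [dilationDensity_one, inv_one, one_pow, mul_one, one_mul] at hderiv
    exact (hasDerivAt_iff_tendsto_slope.1 hderiv).const_mul (σ x)

lemma integral_slope_comp_mul_eq (hσm : Measurable σ) (ha : a < 1 / 2)
    (hσ : ∀ u, |σ u| ≤ A * exp (a * u ^ 2 / 2)) {t : ℝ} (ht : t ∈ Icc (3 / 4 : ℝ) (5 / 4)) :
    ∫ x, (σ (t * x) - σ x) / (t - 1) ∂gaussianReal 0 1
      = ∫ x, σ x * slope (dilationDensity · x) 1 t ∂gaussianReal 0 1 := by
  have hσ1 : Integrable σ (gaussianReal 0 1) := by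
    simpa using integrable_comp_mul_gaussianReal_of_abs_le hσm ha hσ (t := 1) (by norm_num)
  simp only [slope_def_field, dilationDensity_one, mul_div_assoc', mul_sub, mul_one]
  rw [integral_div, integral_div,
    integral_sub (integrable_comp_mul_gaussianReal_of_abs_le hσm ha hσ ht) hσ1,
    integral_sub (integrable_mul_dilationDensity hσm ha hσ ht) hσ1,
    integral_comp_mul_gaussianReal σ (by linarith [ht.1])]

end GaussianGrowth

/-- `lim_{t→1} E[(σ(tG)-σ(G))/(t-1)] = λ₂(σ) = E[σ(G)(G²-1)]`. -/
theorem stmt_2 (σ : ℝ → ℝ) (hσm : Measurable σ)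
    (c₀ c₁ : ℝ) (hc₁ : c₁ < 1)
    (hσg : ∀ u, σ u ^ 2 ≤ c₀ * Real.exp (c₁ * u ^ 2 / 2)) :
    Filter.Tendsto
      (fun t : ℝ => ∫ g, (σ (t * g) - σ g) / (t - 1) ∂(gaussianReal 0 1))
      (nhdsWithin 1 {(1 : ℝ)}ᶜ)
      (nhds (∫ g, σ g * (g ^ 2 - 1) ∂(gaussianReal 0 1))) := by
  have hσ : ∀ u, |σ u| ≤ √c₀ * exp (c₁ / 2 * u ^ 2 / 2) := fun u => by
    convert abs_le_sqrt_mul_exp_half (hσg u) using 3; ring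
  have ha : c₁ / 2 < 1 / 2 := by linarith
  refine (tendsto_integral_mul_slope_dilationDensity hσm ha hσ).congr' ?_
  filter_upwards [Icc_mem_nhdsNE_one]
    with t ht using (integral_slope_comp_mul_eq hσm ha hσ ht).symm
end

section
/- Let σ ∈ L²(ℝ, γ) satisfy σ(u)² ≤ c₀ exp(c₁u²/2) for some c₁ < 1. Then lim_{t→1} E_G[(G² − 1)(σ(tG) − σ(G))]/(t − 1) = λ₄(σ) + 2λ₂(σ), where λ_k(σ) = E_G[σ(G) He_k(G)] and G ∼ N(0,1). -/
/-!
Substituting `u = t g` gives `E[He₂(G) σ(tG)] = ∫ σ(u) s He₂(su) φ(su) du` with `s = 1/t`, which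
moves the dependence on `t` from the merely measurable `σ` onto the smooth Gaussian kernel. The
growth bound `|σ u| ≤ √c₀ exp (c₁ u² / 4)` with `c₁ < 1` dominates the `s`-derivative of that kernel
uniformly for `s` near `1`, so one may differentiate under the integral sign. At `s = 1` the
derivative is `-(u⁴ - 4u² + 1) φ(u) = -(He₄ + 2 He₂)(u) φ(u)`, and `d/dt = -d/ds` there.
-/

open MeasureTheory ProbabilityTheory Real

lemma gaussianPDFReal_zero_one (x : ℝ) :
    gaussianPDFReal 0 1 x = (√(2 * π))⁻¹ * exp (-x ^ 2 / 2) := by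
  simp [gaussianPDFReal]

lemma hasDerivAt_gaussianPDFReal_zero_one (x : ℝ) :
    HasDerivAt (gaussianPDFReal 0 1) (-x * gaussianPDFReal 0 1 x) x := by
  have hq : HasDerivAt (fun y : ℝ => -y ^ 2 / 2) (-x) x := by
    refine (((hasDerivAt_pow 2 x).fun_neg).div_const 2).congr_deriv ?_
    push_cast; ring
  rw [show gaussianPDFReal 0 1 = fun y => (√(2 * π))⁻¹ * exp (-y ^ 2 / 2) from
    funext gaussianPDFReal_zero_one]
  refine (hq.exp.const_mul (√(2 * π))⁻¹).congr_deriv ?_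
  ring

lemma gaussianPDFReal_zero_one_le (x : ℝ) : gaussianPDFReal 0 1 x ≤ exp (-x ^ 2 / 2) := by
  rw [gaussianPDFReal_zero_one]
  have : 1 ≤ √(2 * π) := one_le_sqrt.mpr (by linarith [pi_gt_three])
  exact mul_le_of_le_one_left (exp_nonneg _) (inv_le_one_of_one_le₀ this)

lemma one_add_sq_pow_mul_gaussianPDFReal_le {s₀ s : ℝ} (hs₀ : 0 ≤ s₀) (hs : s ∈ Set.Icc s₀ 2)
    (n : ℕ) (u : ℝ) :
    (1 + (s * u) ^ 2) ^ n * gaussianPDFReal 0 1 (s * u)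
      ≤ 4 ^ n * ((1 + u ^ 2) ^ n * exp (-(s₀ ^ 2 / 2) * u ^ 2)) := by
  obtain ⟨hs₀s, hs2⟩ := hs
  have hsq : s₀ ^ 2 ≤ s ^ 2 := pow_le_pow_left₀ hs₀ hs₀s 2
  have hsq' : s ^ 2 ≤ 4 := by nlinarith
  have hpoly : 1 + (s * u) ^ 2 ≤ 4 * (1 + u ^ 2) := by nlinarith [sq_nonneg u]
  have hexp : exp (-(s * u) ^ 2 / 2) ≤ exp (-(s₀ ^ 2 / 2) * u ^ 2) :=
    exp_le_exp.mpr (by nlinarith [sq_nonneg u])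
  calc (1 + (s * u) ^ 2) ^ n * gaussianPDFReal 0 1 (s * u)
      ≤ (4 * (1 + u ^ 2)) ^ n * exp (-(s₀ ^ 2 / 2) * u ^ 2) :=
        mul_le_mul (pow_le_pow_left₀ (by positivity) hpoly n)
          ((gaussianPDFReal_zero_one_le _).trans hexp) (gaussianPDFReal_nonneg 0 1 _)
          (by positivity)
    _ = 4 ^ n * ((1 + u ^ 2) ^ n * exp (-(s₀ ^ 2 / 2) * u ^ 2)) := by rw [mul_pow]; ring

lemma integrable_one_add_sq_pow_mul_exp_neg_mul_sq {b : ℝ} (hb : 0 < b) (n : ℕ) :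
    Integrable fun u : ℝ => (1 + u ^ 2) ^ n * exp (-b * u ^ 2) := by
  have hterm (m : ℕ) :
      Integrable fun u : ℝ => (n.choose m : ℝ) * (u ^ (2 * m) * exp (-b * u ^ 2)) := by
    refine Integrable.const_mul ?_ _
    have h := integrable_rpow_mul_exp_neg_mul_sq hb (s := ((2 * m : ℕ) : ℝ))
      (by linarith [(Nat.cast_nonneg (2 * m) : (0:ℝ) ≤ _)])
    simpa only [rpow_natCast] using h
  refine (integrable_finsetSum (Finset.range (n + 1)) fun m _ => hterm m).congr
    (Filter.Eventually.of_forall fun u => ?_)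
  simp only [add_comm 1 (u ^ 2), add_pow, one_pow, mul_one, Finset.sum_mul]
  refine Finset.sum_congr rfl fun m _ => ?_
  rw [pow_mul]; ring

lemma integrable_exp_mul_sq_mul_one_add_sq_pow_mul_exp {a b : ℝ} (hab : a < b) (n : ℕ) :
    Integrable fun u : ℝ => exp (a * u ^ 2) * ((1 + u ^ 2) ^ n * exp (-b * u ^ 2)) := by
  refine (integrable_one_add_sq_pow_mul_exp_neg_mul_sq (sub_pos.mpr hab) n).congr
    (Filter.Eventually.of_forall fun u => ?_)
  dsimp only
  rw [mul_left_comm, ← exp_add]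
  ring_nf

/-- The change of variables `u = g / s` turns `E[He₂(G) f(G / s)]` into
`∫ f u * dilatedHe2 s u du`. -/
noncomputable def dilatedHe2 (s u : ℝ) : ℝ := s * ((s * u) ^ 2 - 1) * gaussianPDFReal 0 1 (s * u)

noncomputable def dilatedHe2Deriv (s u : ℝ) : ℝ :=
  (4 * (s * u) ^ 2 - (s * u) ^ 4 - 1) * gaussianPDFReal 0 1 (s * u)

lemma hasDerivAt_dilatedHe2 (s u : ℝ) :
    HasDerivAt (dilatedHe2 · u) (dilatedHe2Deriv s u) s := by
  have hsu : HasDerivAt (fun s : ℝ => s * u) u s := by simpa using (hasDerivAt_id s).mul_const u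
  have hφ := (hasDerivAt_gaussianPDFReal_zero_one (s * u)).comp s hsu
  have hpoly : HasDerivAt (fun s : ℝ => s * ((s * u) ^ 2 - 1)) (3 * s ^ 2 * u ^ 2 - 1) s := by
    have := ((hasDerivAt_pow 3 s).mul_const (u ^ 2)).sub (hasDerivAt_id s)
    refine this.congr_deriv ?_ |>.congr_of_eventuallyEq (Filter.Eventually.of_forall fun s => ?_)
    · push_cast; ring
    · simp only [Pi.sub_apply, id_eq]; ring
  refine (hpoly.mul hφ).congr_deriv ?_
  simp only [dilatedHe2Deriv, Function.comp_def]
  ring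

lemma abs_dilatedHe2_le {s₀ s : ℝ} (hs₀ : 0 ≤ s₀) (hs : s ∈ Set.Icc s₀ 2) (u : ℝ) :
    |dilatedHe2 s u| ≤ 32 * ((1 + u ^ 2) ^ 2 * exp (-(s₀ ^ 2 / 2) * u ^ 2)) := by
  have hφ := gaussianPDFReal_nonneg 0 1 (s * u)
  have hs' : |s| ≤ 2 := abs_le.mpr ⟨by linarith [hs.1], hs.2⟩
  have hx : |(s * u) ^ 2 - 1| ≤ (1 + (s * u) ^ 2) ^ 2 :=
    abs_le.mpr ⟨by nlinarith [sq_nonneg (s * u)], by nlinarith [sq_nonneg (s * u)]⟩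
  calc |dilatedHe2 s u| = |s| * |(s * u) ^ 2 - 1| * gaussianPDFReal 0 1 (s * u) := by
        rw [dilatedHe2, abs_mul, abs_mul, abs_of_nonneg hφ]
    _ ≤ 2 * ((1 + (s * u) ^ 2) ^ 2 * gaussianPDFReal 0 1 (s * u)) := by
        rw [mul_assoc]; gcongr
    _ ≤ 2 * (4 ^ 2 * ((1 + u ^ 2) ^ 2 * exp (-(s₀ ^ 2 / 2) * u ^ 2))) :=
        mul_le_mul_of_nonneg_left (one_add_sq_pow_mul_gaussianPDFReal_le hs₀ hs 2 u) (by norm_num)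
    _ = 32 * ((1 + u ^ 2) ^ 2 * exp (-(s₀ ^ 2 / 2) * u ^ 2)) := by ring

lemma abs_dilatedHe2Deriv_le {s₀ s : ℝ} (hs₀ : 0 ≤ s₀) (hs : s ∈ Set.Icc s₀ 2) (u : ℝ) :
    |dilatedHe2Deriv s u| ≤ 32 * ((1 + u ^ 2) ^ 2 * exp (-(s₀ ^ 2 / 2) * u ^ 2)) := by
  have hφ := gaussianPDFReal_nonneg 0 1 (s * u)
  have hx : |4 * (s * u) ^ 2 - (s * u) ^ 4 - 1| ≤ 2 * (1 + (s * u) ^ 2) ^ 2 :=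
    abs_le.mpr ⟨by nlinarith [sq_nonneg (s * u)], by nlinarith [sq_nonneg (s * u)]⟩
  calc |dilatedHe2Deriv s u|
      = |4 * (s * u) ^ 2 - (s * u) ^ 4 - 1| * gaussianPDFReal 0 1 (s * u) := by
        rw [dilatedHe2Deriv, abs_mul, abs_of_nonneg hφ]
    _ ≤ 2 * ((1 + (s * u) ^ 2) ^ 2 * gaussianPDFReal 0 1 (s * u)) := by
        rw [← mul_assoc]; gcongr
    _ ≤ 2 * (4 ^ 2 * ((1 + u ^ 2) ^ 2 * exp (-(s₀ ^ 2 / 2) * u ^ 2))) :=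
        mul_le_mul_of_nonneg_left (one_add_sq_pow_mul_gaussianPDFReal_le hs₀ hs 2 u) (by norm_num)
    _ = 32 * ((1 + u ^ 2) ^ 2 * exp (-(s₀ ^ 2 / 2) * u ^ 2)) := by ring

lemma integrable_mul_of_abs_le_exp {f g : ℝ → ℝ} (hf : AEStronglyMeasurable f)
    (hg : AEStronglyMeasurable g) {C D a b : ℝ} (hab : a < b) (n : ℕ)
    (hfa : ∀ u, |f u| ≤ C * exp (a * u ^ 2))
    (hgb : ∀ u, |g u| ≤ D * ((1 + u ^ 2) ^ n * exp (-b * u ^ 2))) :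
    Integrable fun u => f u * g u := by
  refine ((integrable_exp_mul_sq_mul_one_add_sq_pow_mul_exp hab n).const_mul (C * D)).mono'
    (hf.mul hg) (Filter.Eventually.of_forall fun u => ?_)
  calc ‖f u * g u‖ = |f u| * |g u| := by rw [Real.norm_eq_abs, abs_mul]
    _ ≤ C * exp (a * u ^ 2) * (D * ((1 + u ^ 2) ^ n * exp (-b * u ^ 2))) :=
        mul_le_mul (hfa u) (hgb u) (abs_nonneg _) ((abs_nonneg _).trans (hfa u))
    _ = C * D * (exp (a * u ^ 2) * ((1 + u ^ 2) ^ n * exp (-b * u ^ 2))) := by ring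

lemma measurable_dilatedHe2 (s : ℝ) : Measurable (dilatedHe2 s) := by
  unfold dilatedHe2; fun_prop

lemma measurable_dilatedHe2Deriv (s : ℝ) : Measurable (dilatedHe2Deriv s) := by
  unfold dilatedHe2Deriv; fun_prop

-- For `s ≥ 3/4` the kernel decays like `exp (-(9/32) u²)`, which beats the growth `exp (a u²)`.
lemma integrable_mul_dilatedHe2 {f : ℝ → ℝ} (hf : AEStronglyMeasurable f) {C a : ℝ}
    (ha : a < 1 / 4) (hfa : ∀ u, |f u| ≤ C * exp (a * u ^ 2)) {s : ℝ}
    (hs : s ∈ Set.Icc (3 / 4) 2) :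
    Integrable fun u => f u * dilatedHe2 s u :=
  integrable_mul_of_abs_le_exp hf (measurable_dilatedHe2 s).aestronglyMeasurable
    (by linarith) 2 hfa (abs_dilatedHe2_le (by norm_num) hs)

lemma hasDerivAt_integral_mul_dilatedHe2 {f : ℝ → ℝ} (hf : AEStronglyMeasurable f) {C a : ℝ}
    (ha : a < 1 / 4) (hfa : ∀ u, |f u| ≤ C * exp (a * u ^ 2)) :
    Integrable (fun u => f u * dilatedHe2Deriv 1 u) ∧
      HasDerivAt (fun s => ∫ u, f u * dilatedHe2 s u) (∫ u, f u * dilatedHe2Deriv 1 u) 1 := by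
  have hball : Set.Icc (3 / 4 : ℝ) 2 ∈ nhds 1 := Icc_mem_nhds (by norm_num) (by norm_num)
  refine hasDerivAt_integral_of_dominated_loc_of_deriv_le
    (bound := fun u =>
      C * exp (a * u ^ 2) * (32 * ((1 + u ^ 2) ^ 2 * exp (-((3 / 4) ^ 2 / 2) * u ^ 2))))
    hball
    (Filter.Eventually.of_forall fun s => hf.mul (measurable_dilatedHe2 s).aestronglyMeasurable)
    (integrable_mul_dilatedHe2 hf ha hfa (by norm_num))
    (hf.mul (measurable_dilatedHe2Deriv 1).aestronglyMeasurable)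
    (Filter.Eventually.of_forall fun u s hs => ?_) ?_
    (Filter.Eventually.of_forall fun u s _ => (hasDerivAt_dilatedHe2 s u).const_mul (f u))
  · rw [Real.norm_eq_abs, abs_mul]
    exact mul_le_mul (hfa u) (abs_dilatedHe2Deriv_le (by norm_num) hs u) (abs_nonneg _)
      ((abs_nonneg _).trans (hfa u))
  · have h := (integrable_exp_mul_sq_mul_one_add_sq_pow_mul_exp
      (show a < (3 / 4) ^ 2 / 2 by linarith) 2).const_mul (C * 32)
    refine h.congr (Filter.Eventually.of_forall fun u => ?_)
    dsimp only
    ring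

lemma abs_le_sqrt_mul_exp_of_sq_le {x c₀ c₁ u : ℝ} (h : x ^ 2 ≤ c₀ * exp (c₁ * u ^ 2 / 2)) :
    |x| ≤ √c₀ * exp (c₁ / 4 * u ^ 2) := by
  have hexp : √(exp (c₁ * u ^ 2 / 2)) = exp (c₁ / 4 * u ^ 2) := by
    rw [sqrt_eq_iff_mul_self_eq_of_pos (exp_pos _), ← exp_add]; ring_nf
  calc |x| ≤ √(c₀ * exp (c₁ * u ^ 2 / 2)) := abs_le_sqrt h
    _ = √c₀ * exp (c₁ / 4 * u ^ 2) := by rw [sqrt_mul' _ (exp_nonneg _), hexp]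

lemma gaussianPDFReal_mul_he2_mul_comp_mul {t : ℝ} (ht : t ≠ 0) (f : ℝ → ℝ) (x : ℝ) :
    gaussianPDFReal 0 1 x * ((x ^ 2 - 1) * f (t * x))
      = t * (f (t * x) * dilatedHe2 t⁻¹ (t * x)) := by
  rw [dilatedHe2, inv_mul_cancel_left₀ ht]
  field_simp

lemma integral_gaussianPDFReal_mul_he2_mul_comp_mul {t : ℝ} (ht : 0 < t) (f : ℝ → ℝ) :
    ∫ x, gaussianPDFReal 0 1 x * ((x ^ 2 - 1) * f (t * x)) = ∫ u, f u * dilatedHe2 t⁻¹ u := by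
  simp_rw [gaussianPDFReal_mul_he2_mul_comp_mul ht.ne' f]
  rw [integral_const_mul, Measure.integral_comp_mul_left (fun u => f u * dilatedHe2 t⁻¹ u) t,
    smul_eq_mul, abs_of_pos (inv_pos.mpr ht), mul_inv_cancel_left₀ ht.ne']

lemma integrable_gaussianPDFReal_mul_he2_mul_comp_mul {t : ℝ} (ht : t ≠ 0) {f : ℝ → ℝ}
    (hf : Integrable fun u => f u * dilatedHe2 t⁻¹ u) :
    Integrable fun x => gaussianPDFReal 0 1 x * ((x ^ 2 - 1) * f (t * x)) := by
  simp_rw [gaussianPDFReal_mul_he2_mul_comp_mul ht f]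
  exact (hf.comp_mul_left' ht).const_mul t

lemma integral_he2_mul_sub_gaussianReal {t : ℝ} (ht : 0 < t) {f : ℝ → ℝ}
    (hft : Integrable fun u => f u * dilatedHe2 t⁻¹ u)
    (hf1 : Integrable fun u => f u * dilatedHe2 1 u) :
    ∫ g, (g ^ 2 - 1) * (f (t * g) - f g) ∂gaussianReal 0 1
      = (∫ u, f u * dilatedHe2 t⁻¹ u) - ∫ u, f u * dilatedHe2 1 u := by
  rw [← inv_one] at hf1
  calc ∫ g, (g ^ 2 - 1) * (f (t * g) - f g) ∂gaussianReal 0 1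
      = ∫ x, (gaussianPDFReal 0 1 x * ((x ^ 2 - 1) * f (t * x))
          - gaussianPDFReal 0 1 x * ((x ^ 2 - 1) * f (1 * x))) := by
        rw [integral_gaussianReal_eq_integral_smul one_ne_zero]
        congr 1 with x
        rw [smul_eq_mul, one_mul]
        ring
    _ = (∫ u, f u * dilatedHe2 t⁻¹ u) - ∫ u, f u * dilatedHe2 1 u := by
        rw [integral_sub (integrable_gaussianPDFReal_mul_he2_mul_comp_mul ht.ne' hft)
          (integrable_gaussianPDFReal_mul_he2_mul_comp_mul one_ne_zero hf1),
          integral_gaussianPDFReal_mul_he2_mul_comp_mul ht,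
          integral_gaussianPDFReal_mul_he2_mul_comp_mul one_pos, inv_one]

lemma integral_he4_add_two_he2_gaussianReal {f : ℝ → ℝ}
    (hK : Integrable fun u => f u * dilatedHe2 1 u)
    (hK' : Integrable fun u => f u * dilatedHe2Deriv 1 u) :
    (∫ g, f g * (g ^ 4 - 6 * g ^ 2 + 3) ∂gaussianReal 0 1)
        + 2 * ∫ g, f g * (g ^ 2 - 1) ∂gaussianReal 0 1
      = -∫ u, f u * dilatedHe2Deriv 1 u := by
  have he2 (u : ℝ) : gaussianPDFReal 0 1 u • (f u * (u ^ 2 - 1)) = f u * dilatedHe2 1 u := by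
    simp only [dilatedHe2, smul_eq_mul, one_mul]; ring
  have he4 (u : ℝ) : gaussianPDFReal 0 1 u • (f u * (u ^ 4 - 6 * u ^ 2 + 3))
      = -(f u * dilatedHe2Deriv 1 u) - 2 * (f u * dilatedHe2 1 u) := by
    simp only [dilatedHe2, dilatedHe2Deriv, smul_eq_mul, one_mul]; ring
  simp_rw [integral_gaussianReal_eq_integral_smul one_ne_zero, he2, he4]
  rw [integral_sub hK'.fun_neg (hK.const_mul 2), integral_neg, integral_const_mul]
  ring

/-- `lim_{t→1} E[(G²-1)(σ(tG)-σ(G))]/(t-1) = λ₄(σ) + 2 λ₂(σ)`,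
where `λ₂(σ) = E[σ(G)(G²-1)]` and `λ₄(σ) = E[σ(G)(G⁴-6G²+3)]` are the Hermite
coefficients of `σ`. -/
theorem stmt_3 (σ : ℝ → ℝ) (hσm : Measurable σ)
    (c₀ c₁ : ℝ) (hc₁ : c₁ < 1)
    (hσg : ∀ u, σ u ^ 2 ≤ c₀ * Real.exp (c₁ * u ^ 2 / 2)) :
    Filter.Tendsto
      (fun t : ℝ => (∫ g, (g ^ 2 - 1) * (σ (t * g) - σ g) ∂(gaussianReal 0 1)) / (t - 1))
      (nhdsWithin 1 {(1 : ℝ)}ᶜ)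
      (nhds ((∫ g, σ g * (g ^ 4 - 6 * g ^ 2 + 3) ∂(gaussianReal 0 1))
        + 2 * ∫ g, σ g * (g ^ 2 - 1) ∂(gaussianReal 0 1))) := by
  have hσ (u : ℝ) : |σ u| ≤ √c₀ * exp (c₁ / 4 * u ^ 2) := abs_le_sqrt_mul_exp_of_sq_le (hσg u)
  have ha : c₁ / 4 < 1 / 4 := by linarith
  have hK {s : ℝ} (hs : s ∈ Set.Icc (3 / 4) 2) : Integrable fun u => σ u * dilatedHe2 s u :=
    integrable_mul_dilatedHe2 hσm.aestronglyMeasurable ha hσ hs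
  obtain ⟨hK', hderiv⟩ := hasDerivAt_integral_mul_dilatedHe2 hσm.aestronglyMeasurable ha hσ
  have hderiv_inv : HasDerivAt (fun t => ∫ u, σ u * dilatedHe2 t⁻¹ u)
      (-∫ u, σ u * dilatedHe2Deriv 1 u) 1 := by
    have h := hderiv.comp_of_eq (1 : ℝ) (hasDerivAt_inv one_ne_zero) inv_one.symm
    simpa [Function.comp_def] using h
  rw [integral_he4_add_two_he2_gaussianReal (hK (by norm_num)) hK']
  refine (hasDerivAt_iff_tendsto_slope.mp hderiv_inv).congr' ?_
  filter_upwards [nhdsWithin_le_nhds (Ioo_mem_nhds (by norm_num : (1 / 2 : ℝ) < 1)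
    (by norm_num : (1 : ℝ) < 4 / 3))] with t ⟨ht₁, ht₂⟩
  have ht : 0 < t := by linarith
  have hinv : t⁻¹ ∈ Set.Icc (3 / 4 : ℝ) 2 :=
    ⟨by rw [le_inv_comm₀ (by norm_num) ht]; linarith,
     by rw [inv_le_comm₀ ht (by norm_num)]; linarith⟩
  rw [slope_def_field, integral_he2_mul_sub_gaussianReal ht (hK hinv) (hK (by norm_num)), inv_one]
end

section
/- Fix a symmetric matrix Δ ∈ ℝ^{d×d} and a matrix P₁ ∈ ℝ^{d×N} with orthonormal columns, N < d. Then max over G ∈ ℝ^{N×d} of Tr(P₁GΔ) subject to ‖P₁G + GᵀP₁ᵀ‖_F² ≤ 1 equals (1/2)√(‖Δ‖_F² − ‖P₂ᵀΔP₂‖_F²), where P₂ ∈ ℝ^{d×(d−N)} completes P₁ to an orthonormal basis. Equivalently, max_G ⟨P₁G + GᵀP₁ᵀ, Δ⟩²/‖P₁G + GᵀP₁ᵀ‖_F² = ‖Δ‖_F² − ‖P₂ᵀΔP₂‖_F². -/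
open Matrix

/-! With `K = P₂P₂ᵀ = 1 - P₁P₁ᵀ`, every `S = P₁G + GᵀP₁ᵀ` satisfies `KSK = 0`, so the Frobenius
pairing of `S` with `Δ` equals its pairing with `D = Δ - KΔK`; it is also `2 Tr(P₁GΔ)`.
Cauchy–Schwarz bounds `2 Tr(P₁GΔ)` by `‖D‖_F`, where `‖D‖_F² = ‖Δ‖_F² - ‖P₂ᵀΔP₂‖_F²`, and the
bound is attained because `D` is itself `P₁G + GᵀP₁ᵀ` for `G = P₁ᵀΔ - ½ P₁ᵀΔP₁P₁ᵀ`. -/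

/-- Squared Frobenius norm of a matrix. -/
def frobSq {m n : Type*} [Fintype m] [Fintype n] (M : Matrix m n ℝ) : ℝ :=
  ∑ i, ∑ j, (M i j) ^ 2

section Frobenius

variable {m n : Type*} [Fintype m] [Fintype n]

lemma frobSq_eq_trace (M : Matrix m n ℝ) : frobSq M = (Mᵀ * M).trace := by
  simp only [frobSq, trace, diag, mul_apply, transpose_apply, sq]
  exact Finset.sum_comm

lemma frobSq_nonneg (M : Matrix m n ℝ) : 0 ≤ frobSq M := by
  unfold frobSq
  positivity

lemma frobSq_smul (c : ℝ) (M : Matrix m n ℝ) : frobSq (c • M) = c ^ 2 * frobSq M := by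
  simp [frobSq, Finset.mul_sum, mul_pow]

lemma sq_trace_transpose_mul_le (X Y : Matrix m n ℝ) :
    (Xᵀ * Y).trace ^ 2 ≤ frobSq X * frobSq Y := by
  have h := Finset.sum_mul_sq_le_sq_mul_sq Finset.univ (fun p : m × n => X p.1 p.2)
    (fun p => Y p.1 p.2)
  have htrace : (Xᵀ * Y).trace = ∑ i, ∑ j, X i j * Y i j := by
    simp only [trace, diag, mul_apply, transpose_apply]
    exact Finset.sum_comm
  simpa only [htrace, frobSq, Fintype.sum_prod_type] using h

theorem isGreatest_half_sqrt_frobSq {V : Type*} [AddCommGroup V] [Module ℝ V]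
    (S : V →ₗ[ℝ] Matrix m n ℝ) (f : V → ℝ) (D : Matrix m n ℝ)
    (hf : ∀ v, 2 * f v = ((S v)ᵀ * D).trace) (hD : D ∈ LinearMap.range S) :
    IsGreatest {y | ∃ v, frobSq (S v) ≤ 1 ∧ y = f v} (1 / 2 * √(frobSq D)) := by
  obtain ⟨v₀, rfl⟩ := hD
  constructor
  · set c := (√(frobSq (S v₀)))⁻¹
    refine ⟨c • v₀, ?_, ?_⟩
    · rw [map_smul, frobSq_smul, inv_pow, Real.sq_sqrt (frobSq_nonneg _)]
      exact inv_mul_le_one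
    · have h := hf (c • v₀)
      rw [map_smul, transpose_smul, smul_mul, trace_smul, ← frobSq_eq_trace, smul_eq_mul,
        inv_mul_eq_div, Real.div_sqrt] at h
      linarith
  · rintro _ ⟨v, hv, rfl⟩
    have hcs : (2 * f v) ^ 2 ≤ frobSq (S v₀) := by
      calc (2 * f v) ^ 2 ≤ frobSq (S v) * frobSq (S v₀) := hf v ▸ sq_trace_transpose_mul_le _ _
        _ ≤ frobSq (S v₀) := mul_le_of_le_one_left (frobSq_nonneg _) hv
    linarith [le_abs_self (2 * f v), Real.abs_le_sqrt hcs]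

end Frobenius

section Compression

variable {n : Type*} [Fintype n]

lemma trace_mul_sub_compress {K X : Matrix n n ℝ} (Δ : Matrix n n ℝ) (hX : K * X * K = 0) :
    (X * (Δ - K * Δ * K)).trace = (X * Δ).trace := by
  rw [mul_sub, trace_sub, ← Matrix.mul_assoc, ← Matrix.mul_assoc, trace_mul_cycle,
    ← Matrix.mul_assoc K, hX, Matrix.zero_mul, trace_zero, sub_zero]

lemma frobSq_sub_compress {K Δ : Matrix n n ℝ} (hK : IsIdempotentElem K) (hKt : Kᵀ = K)
    (hΔ : Δᵀ = Δ) : frobSq (Δ - K * Δ * K) = frobSq Δ - (K * Δ * K * Δ).trace := by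
  have hcompress : K * (Δ - K * Δ * K) * K = 0 := by
    simp only [mul_sub, sub_mul, ← Matrix.mul_assoc, hK.eq]
    simp only [Matrix.mul_assoc, hK.eq, sub_self]
  rw [frobSq_eq_trace, transpose_sub, transpose_mul, transpose_mul, hKt, hΔ, ← Matrix.mul_assoc,
    trace_mul_sub_compress Δ hcompress, sub_mul, trace_sub, frobSq_eq_trace, hΔ]

lemma frobSq_transpose_mul_mul {l : Type*} [Fintype l] (Q : Matrix n l ℝ) {Δ : Matrix n n ℝ}
    (hΔ : Δᵀ = Δ) : frobSq (Qᵀ * Δ * Q) = (Q * Qᵀ * Δ * (Q * Qᵀ) * Δ).trace := by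
  rw [frobSq_eq_trace, transpose_mul, transpose_mul, hΔ, transpose_transpose]
  simp only [Matrix.mul_assoc]
  rw [trace_mul_comm Qᵀ, Matrix.mul_assoc, trace_mul_comm Δ]
  simp only [Matrix.mul_assoc]

end Compression

section Orthonormal

variable {n k : Type*} [Fintype k] (P : Matrix n k ℝ)

def symmMulLeft : Matrix k n ℝ →ₗ[ℝ] Matrix n n ℝ where
  toFun G := P * G + Gᵀ * Pᵀ
  map_add' G H := by simp only [Matrix.mul_add, transpose_add, Matrix.add_mul]; abel
  map_smul' c G := by simp only [Matrix.mul_smul, transpose_smul, Matrix.smul_mul, smul_add,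
    RingHom.id_apply]

lemma symmMulLeft_apply (G : Matrix k n ℝ) : symmMulLeft P G = P * G + Gᵀ * Pᵀ := rfl

lemma transpose_symmMulLeft (G : Matrix k n ℝ) : (symmMulLeft P G)ᵀ = symmMulLeft P G := by
  simp only [symmMulLeft_apply, transpose_add, transpose_mul, transpose_transpose, add_comm]

variable [Fintype n] [DecidableEq n] {P}

lemma symmMulLeft_eq_sub_compress {Δ : Matrix n n ℝ} (hΔ : Δᵀ = Δ) :
    symmMulLeft P (Pᵀ * Δ - (1 / 2 : ℝ) • (Pᵀ * Δ * P * Pᵀ))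
      = Δ - (1 - P * Pᵀ) * Δ * (1 - P * Pᵀ) := by
  simp only [symmMulLeft_apply, transpose_sub, transpose_smul, transpose_mul, transpose_transpose,
    hΔ, Matrix.mul_sub, Matrix.sub_mul, Matrix.mul_smul, Matrix.smul_mul, Matrix.mul_one,
    Matrix.one_mul, Matrix.mul_assoc]
  module

variable [DecidableEq k]

lemma isIdempotentElem_one_sub_mul_transpose (hP : Pᵀ * P = 1) :
    IsIdempotentElem (1 - P * Pᵀ) := by
  refine IsIdempotentElem.one_sub ?_
  rw [IsIdempotentElem, Matrix.mul_assoc, ← Matrix.mul_assoc Pᵀ, hP, Matrix.one_mul]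

lemma compress_symmMulLeft_eq_zero (hP : Pᵀ * P = 1) (G : Matrix k n ℝ) :
    (1 - P * Pᵀ) * symmMulLeft P G * (1 - P * Pᵀ) = 0 := by
  have hleft : (1 - P * Pᵀ) * P = 0 := by
    rw [Matrix.sub_mul, Matrix.one_mul, Matrix.mul_assoc, hP, Matrix.mul_one, sub_self]
  have hright : Pᵀ * (1 - P * Pᵀ) = 0 := by
    rw [Matrix.mul_sub, Matrix.mul_one, ← Matrix.mul_assoc, hP, Matrix.one_mul, sub_self]
  rw [symmMulLeft_apply, Matrix.mul_add, Matrix.add_mul, ← Matrix.mul_assoc, hleft,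
    ← Matrix.mul_assoc, Matrix.mul_assoc (_ * Gᵀ), hright, Matrix.zero_mul, Matrix.zero_mul,
    Matrix.mul_zero, add_zero]

lemma two_mul_trace_mul_mul_eq (hP : Pᵀ * P = 1) {Δ : Matrix n n ℝ} (hΔ : Δᵀ = Δ)
    (G : Matrix k n ℝ) :
    2 * (P * G * Δ).trace
      = ((symmMulLeft P G)ᵀ * (Δ - (1 - P * Pᵀ) * Δ * (1 - P * Pᵀ))).trace := by
  rw [transpose_symmMulLeft, trace_mul_sub_compress Δ (compress_symmMulLeft_eq_zero hP G),
    symmMulLeft_apply, add_mul, trace_add, two_mul]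
  congr 1
  rw [← trace_transpose, transpose_mul, transpose_mul, hΔ, trace_mul_comm]

end Orthonormal

theorem stmt_11_general (d N : ℕ)
    (Δ : Matrix (Fin d) (Fin d) ℝ) (hΔ : Δ.IsSymm)
    (P₁ : Matrix (Fin d) (Fin N) ℝ) (P₂ : Matrix (Fin d) (Fin (d - N)) ℝ)
    (hP₁ : P₁ᵀ * P₁ = 1)
    (hcomp : P₁ * P₁ᵀ + P₂ * P₂ᵀ = 1) :
    IsGreatest {y : ℝ | ∃ G : Matrix (Fin N) (Fin d) ℝ,
        frobSq (P₁ * G + Gᵀ * P₁ᵀ) ≤ 1 ∧ y = (P₁ * G * Δ).trace}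
      ((1 / 2) * Real.sqrt (frobSq Δ - frobSq (P₂ᵀ * Δ * P₂))) := by
  have hK : P₂ * P₂ᵀ = 1 - P₁ * P₁ᵀ := eq_sub_of_add_eq' hcomp
  have hKt : (1 - P₁ * P₁ᵀ)ᵀ = 1 - P₁ * P₁ᵀ := by
    rw [transpose_sub, transpose_one, transpose_mul, transpose_transpose]
  rw [frobSq_transpose_mul_mul P₂ hΔ.eq, hK,
    ← frobSq_sub_compress (isIdempotentElem_one_sub_mul_transpose hP₁) hKt hΔ.eq]
  exact isGreatest_half_sqrt_frobSq (symmMulLeft P₁) _ _ (two_mul_trace_mul_mul_eq hP₁ hΔ.eq)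
    ⟨_, symmMulLeft_eq_sub_compress hΔ.eq⟩

/-- for symmetric `Δ` and `P₁` with orthonormal columns completed
by `P₂`, the maximum of `Tr(P₁GΔ)` over `‖P₁G + GᵀP₁ᵀ‖_F² ≤ 1` equals
`(1/2)√(‖Δ‖_F² - ‖P₂ᵀΔP₂‖_F²)`. -/
theorem stmt_11 (d N : ℕ) (hN : N < d)
    (Δ : Matrix (Fin d) (Fin d) ℝ) (hΔ : Δ.IsSymm)
    (P₁ : Matrix (Fin d) (Fin N) ℝ) (P₂ : Matrix (Fin d) (Fin (d - N)) ℝ)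
    (hP₁ : P₁ᵀ * P₁ = 1) (hP₂ : P₂ᵀ * P₂ = 1)
    (hcomp : P₁ * P₁ᵀ + P₂ * P₂ᵀ = 1) :
    IsGreatest {y : ℝ | ∃ G : Matrix (Fin N) (Fin d) ℝ,
        frobSq (P₁ * G + Gᵀ * P₁ᵀ) ≤ 1 ∧ y = (P₁ * G * Δ).trace}
      ((1 / 2) * Real.sqrt (frobSq Δ - frobSq (P₂ᵀ * Δ * P₂))) :=
  stmt_11_general d N Δ hΔ P₁ P₂ hP₁ hcomp
end

section
/- Let L(W, c) = E_{x∼N(0,I_d)}[(⟨xxᵀ, B − WWᵀ⟩ + b₀ − c)²] with B ⪰ 0 symmetric. At any critical point (W₀, c₀) of L, the matrix Γ₀ = W₀W₀ᵀ satisfies BW₀ = W₀W₀ᵀW₀ and c₀ = b₀ + Tr(B − Γ₀); consequently (after diagonalizing B) there exists a set of eigenvectors of B with positive eigenvalues such that Γ₀ = PBP for the associated orthogonal projection P. -/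
open MeasureTheory ProbabilityTheory Matrix

/-- The standard Gaussian measure `N(0, I_d)` on `ℝᵈ`. -/
noncomputable def stdGaussian (d : ℕ) : Measure (Fin d → ℝ) :=
  Measure.pi (fun _ => gaussianReal 0 1)

/-!
With `A = B - WWᵀ` and `e = b₀ - c`, the moments `E[xᵢxⱼ] = δᵢⱼ` and Isserlis' formula
`E[xᵢxⱼxₖxₗ] = δᵢⱼδₖₗ + δᵢₖδⱼₗ + δᵢₗδⱼₖ` turn `L(W, c)` into the quadratic form
`(tr A + e)² + tr (A Aᵀ) + tr (A A)`. Its derivative at `(W₀, c₀)` in the direction `(Z, h)` is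
`-2 s (2 tr (Zᵀ W₀) + h) - 8 tr (Zᵀ A₀ W₀)` with `s = tr A₀ + b₀ - c₀`. The direction `(0, 1)`
gives `s = 0`, and then the direction `(A₀ W₀, 0)` gives `‖A₀ W₀‖² = 0`, i.e. `B W₀ = W₀ W₀ᵀ W₀`.

Finally, if `B Γ = Γ²` for Hermitian `B` and `Γ = W₀ W₀ᵀ`, let `P` be the orthogonal projection onto
the range of `Γ`, read off the spectral decomposition of `Γ`. Writing `P = Γ X`, we get
`B P = Γ² X = Γ P = Γ`, hence also `P B = Γ` by taking adjoints, and `P B P = P Γ = Γ`.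
-/

lemma integrable_pow_gaussianReal (n : ℕ) :
    Integrable (fun x : ℝ => x ^ n) (gaussianReal 0 1) :=
  integrable_pow_of_mem_interior_integrableExpSet (X := fun x => x) (by simp) n

lemma integral_pow_gaussianReal (n : ℕ) :
    ∫ x, x ^ n ∂gaussianReal 0 1 = iteratedDeriv n (fun t => Real.exp (t ^ 2 / 2)) 0 := by
  have hmgf : mgf (fun x => x) (gaussianReal 0 1) = fun t => Real.exp (t ^ 2 / 2) := by
    simp [mgf_fun_id_gaussianReal]
  rw [← hmgf, iteratedDeriv_mgf_zero (by simp)]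
  rfl

lemma iteratedDeriv_succ_exp_half_sq {n : ℕ} {p q : ℝ → ℝ}
    (h : iteratedDeriv n (fun t => Real.exp (t ^ 2 / 2)) = fun t => p t * Real.exp (t ^ 2 / 2))
    (hp : ∀ t, HasDerivAt p (q t - t * p t) t) :
    iteratedDeriv (n + 1) (fun t => Real.exp (t ^ 2 / 2)) =
      fun t => q t * Real.exp (t ^ 2 / 2) := by
  rw [iteratedDeriv_succ, h]
  ext t
  have hsq : HasDerivAt (fun t : ℝ => t ^ 2 / 2) t t := by
    simpa using (hasDerivAt_pow 2 t).div_const 2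
  exact ((hp t).mul hsq.exp).deriv.trans (by ring)

theorem gaussianReal_moments :
    ∫ x, x ^ 2 ∂gaussianReal 0 1 = 1 ∧ ∫ x, x ^ 3 ∂gaussianReal 0 1 = 0 ∧
      ∫ x, x ^ 4 ∂gaussianReal 0 1 = 3 := by
  simp only [integral_pow_gaussianReal]
  have h₀ : iteratedDeriv 0 (fun t => Real.exp (t ^ 2 / 2)) =
      fun t => 1 * Real.exp (t ^ 2 / 2) := by
    simp
  have h₁ := iteratedDeriv_succ_exp_half_sq (q := id) h₀ fun t =>
    (hasDerivAt_const t 1).congr_deriv (by simp)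
  have h₂ := iteratedDeriv_succ_exp_half_sq (q := fun t => 1 + t ^ 2) h₁ fun t =>
    (hasDerivAt_id t).congr_deriv (by simp; ring)
  have h₃ := iteratedDeriv_succ_exp_half_sq (q := fun t => 3 * t + t ^ 3) h₂ fun t =>
    ((hasDerivAt_pow 2 t).const_add 1).congr_deriv (by ring)
  have h₄ := iteratedDeriv_succ_exp_half_sq (q := fun t => 3 + 6 * t ^ 2 + t ^ 4) h₃ fun t =>
    (((hasDerivAt_id t).const_mul 3).add (hasDerivAt_pow 3 t)).congr_deriv (by simp; ring)
  norm_num [h₂, h₃, h₄]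

instance (d : ℕ) : IsProbabilityMeasure (stdGaussian d) :=
  inferInstanceAs (IsProbabilityMeasure (Measure.pi _))

section StdGaussian

variable {d : ℕ}

lemma integral_prod_pow_stdGaussian (e : Fin d → ℕ) :
    ∫ x, ∏ m, x m ^ e m ∂stdGaussian d = ∏ m, ∫ y, y ^ e m ∂gaussianReal 0 1 :=
  integral_fintype_prod_eq_prod (fun m y => y ^ e m)

lemma integrable_prod_pow_stdGaussian (e : Fin d → ℕ) :
    Integrable (fun x => ∏ m, x m ^ e m) (stdGaussian d) :=
  Integrable.fintype_prod fun m => integrable_pow_gaussianReal (e m)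

lemma coord_eq_prod_pow (x : Fin d → ℝ) (i : Fin d) :
    x i = ∏ m, x m ^ (if i = m then 1 else 0) := by
  simp [pow_ite]

lemma integrable_mul_coord (i j : Fin d) :
    Integrable (fun x : Fin d → ℝ => x i * x j) (stdGaussian d) := by
  simp_rw [coord_eq_prod_pow _ i, coord_eq_prod_pow _ j, ← Finset.prod_mul_distrib, ← pow_add]
  exact integrable_prod_pow_stdGaussian _

lemma integrable_mul_four_coord (i j k l : Fin d) :
    Integrable (fun x : Fin d → ℝ => x i * x j * (x k * x l)) (stdGaussian d) := by
  simp_rw [coord_eq_prod_pow _ i, coord_eq_prod_pow _ j, coord_eq_prod_pow _ k,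
    coord_eq_prod_pow _ l, ← Finset.prod_mul_distrib, ← pow_add]
  exact integrable_prod_pow_stdGaussian _

lemma integral_mul_coord (i j : Fin d) :
    ∫ x, x i * x j ∂stdGaussian d = if i = j then 1 else 0 := by
  simp_rw [coord_eq_prod_pow _ i, coord_eq_prod_pow _ j, ← Finset.prod_mul_distrib, ← pow_add]
  rw [integral_prod_pow_stdGaussian, ← Finset.prod_subset (Finset.subset_univ {i, j})]
  · by_cases hij : i = j <;> simp_all [Finset.prod_insert, eq_comm, gaussianReal_moments]
  · intro m _ hm
    simp only [Finset.mem_insert, Finset.mem_singleton, not_or] at hm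
    simp [Ne.symm hm.1, Ne.symm hm.2]

lemma integral_mul_four_coord (i j k l : Fin d) :
    ∫ x, x i * x j * (x k * x l) ∂stdGaussian d =
      (if i = j then 1 else 0) * (if k = l then 1 else 0) +
        (if i = k then 1 else 0) * (if j = l then 1 else 0) +
        (if i = l then 1 else 0) * (if j = k then 1 else 0) := by
  simp_rw [coord_eq_prod_pow _ i, coord_eq_prod_pow _ j, coord_eq_prod_pow _ k,
    coord_eq_prod_pow _ l, ← Finset.prod_mul_distrib, ← pow_add]
  rw [integral_prod_pow_stdGaussian, ← Finset.prod_subset (Finset.subset_univ {i, j, k, l})]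
  · by_cases hij : i = j <;> by_cases hik : i = k <;> by_cases hil : i = l <;>
      by_cases hjk : j = k <;> by_cases hjl : j = l <;> by_cases hkl : k = l <;> subst_vars <;>
      simp_all [Finset.prod_insert, eq_comm, gaussianReal_moments, one_add_one_eq_two,
        two_add_one_eq_three]
  · intro m _ hm
    simp only [Finset.mem_insert, Finset.mem_singleton, not_or] at hm
    simp [Ne.symm hm.1, Ne.symm hm.2.1, Ne.symm hm.2.2.1, Ne.symm hm.2.2.2]

lemma integral_sum_sum {α β Ω : Type*} [Fintype α] [Fintype β] [MeasurableSpace Ω]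
    {μ : Measure Ω} (f : α → β → Ω → ℝ) (hf : ∀ a b, Integrable (f a b) μ) :
    ∫ ω, ∑ a, ∑ b, f a b ω ∂μ = ∑ a, ∑ b, ∫ ω, f a b ω ∂μ := by
  rw [integral_finsetSum _ fun a _ => integrable_finsetSum _ fun b _ => hf a b]
  exact Finset.sum_congr rfl fun a _ => integral_finsetSum _ fun b _ => hf a b

lemma dotProduct_mulVec_self_eq_sum (A : Matrix (Fin d) (Fin d) ℝ) (x : Fin d → ℝ) :
    x ⬝ᵥ (A *ᵥ x) = ∑ i, ∑ j, A i j * (x i * x j) := by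
  simp only [dotProduct, mulVec, Finset.mul_sum]
  exact Finset.sum_congr rfl fun i _ => Finset.sum_congr rfl fun j _ => by ring

lemma dotProduct_mulVec_self_mul_eq_sum (A A' : Matrix (Fin d) (Fin d) ℝ) (x : Fin d → ℝ) :
    x ⬝ᵥ (A *ᵥ x) * x ⬝ᵥ (A' *ᵥ x) = ∑ p : Fin d × Fin d, ∑ q : Fin d × Fin d,
      A p.1 p.2 * A' q.1 q.2 * (x p.1 * x p.2 * (x q.1 * x q.2)) := by
  rw [dotProduct_mulVec_self_eq_sum, dotProduct_mulVec_self_eq_sum, ← Fintype.sum_prod_type',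
    ← Fintype.sum_prod_type', Fintype.sum_mul_sum]
  exact Finset.sum_congr rfl fun p _ => Finset.sum_congr rfl fun q _ => by ring

lemma integrable_dotProduct_mulVec_self (A : Matrix (Fin d) (Fin d) ℝ) :
    Integrable (fun x => x ⬝ᵥ (A *ᵥ x)) (stdGaussian d) := by
  simp_rw [dotProduct_mulVec_self_eq_sum]
  exact integrable_finsetSum _ fun i _ => integrable_finsetSum _ fun j _ =>
    (integrable_mul_coord i j).const_mul (A i j)

lemma integrable_dotProduct_mulVec_self_mul (A A' : Matrix (Fin d) (Fin d) ℝ) :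
    Integrable (fun x => x ⬝ᵥ (A *ᵥ x) * x ⬝ᵥ (A' *ᵥ x)) (stdGaussian d) := by
  simp_rw [dotProduct_mulVec_self_mul_eq_sum]
  exact integrable_finsetSum _ fun p _ => integrable_finsetSum _ fun q _ =>
    (integrable_mul_four_coord p.1 p.2 q.1 q.2).const_mul (A p.1 p.2 * A' q.1 q.2)

lemma integral_dotProduct_mulVec_self (A : Matrix (Fin d) (Fin d) ℝ) :
    ∫ x, x ⬝ᵥ (A *ᵥ x) ∂stdGaussian d = A.trace := by
  simp_rw [dotProduct_mulVec_self_eq_sum]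
  refine (integral_sum_sum _ fun i j => (integrable_mul_coord i j).const_mul (A i j)).trans ?_
  simp [integral_const_mul, integral_mul_coord, trace]

lemma integral_dotProduct_mulVec_self_mul (A A' : Matrix (Fin d) (Fin d) ℝ) :
    ∫ x, x ⬝ᵥ (A *ᵥ x) * x ⬝ᵥ (A' *ᵥ x) ∂stdGaussian d =
      A.trace * A'.trace + (A * A'ᵀ).trace + (A * A').trace := by
  simp_rw [dotProduct_mulVec_self_mul_eq_sum]
  refine (integral_sum_sum _ fun (p q : Fin d × Fin d) =>
    (integrable_mul_four_coord p.1 p.2 q.1 q.2).const_mul (A p.1 p.2 * A' q.1 q.2)).trans ?_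
  simp [integral_const_mul, integral_mul_four_coord, Fintype.sum_prod_type, mul_add,
    Finset.sum_add_distrib, trace, mul_apply, Fintype.sum_mul_sum]

end StdGaussian

variable (n : Type*) [Fintype n] in
noncomputable def gaussianMomentForm : LinearMap.BilinForm ℝ (Matrix n n ℝ × ℝ) :=
  LinearMap.mk₂ ℝ
    (fun X Y => (X.1.trace + X.2) * (Y.1.trace + Y.2) + (X.1 * Y.1ᵀ).trace + (X.1 * Y.1).trace)
    (fun X X' Y => by simp only [Prod.fst_add, Prod.snd_add, trace_add, add_mul]; ring)
    (fun c X Y => by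
      simp only [Prod.smul_fst, Prod.smul_snd, trace_smul, smul_mul, smul_eq_mul]; ring)
    (fun X Y Y' => by
      simp only [Prod.fst_add, Prod.snd_add, trace_add, mul_add, transpose_add]; ring)
    (fun c X Y => by
      simp only [Prod.smul_fst, Prod.smul_snd, trace_smul, Matrix.mul_smul, transpose_smul,
        smul_eq_mul]; ring)

@[simp]
lemma gaussianMomentForm_apply {n : Type*} [Fintype n] (X Y : Matrix n n ℝ × ℝ) :
    gaussianMomentForm n X Y =
      (X.1.trace + X.2) * (Y.1.trace + Y.2) + (X.1 * Y.1ᵀ).trace + (X.1 * Y.1).trace :=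
  rfl

theorem integral_mul_eq_gaussianMomentForm {d : ℕ} (A A' : Matrix (Fin d) (Fin d) ℝ)
    (e e' : ℝ) :
    ∫ x, (x ⬝ᵥ (A *ᵥ x) + e) * (x ⬝ᵥ (A' *ᵥ x) + e') ∂stdGaussian d =
      gaussianMomentForm (Fin d) (A, e) (A', e') := by
  have hexp : (fun x : Fin d → ℝ => (x ⬝ᵥ (A *ᵥ x) + e) * (x ⬝ᵥ (A' *ᵥ x) + e')) = fun x =>
      x ⬝ᵥ (A *ᵥ x) * x ⬝ᵥ (A' *ᵥ x) + (e' * x ⬝ᵥ (A *ᵥ x) + (e * x ⬝ᵥ (A' *ᵥ x) + e * e')) := by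
    ext x; ring
  have hA := integrable_dotProduct_mulVec_self A
  have hA' := integrable_dotProduct_mulVec_self A'
  rw [hexp, integral_add (integrable_dotProduct_mulVec_self_mul A A') (by fun_prop),
    integral_add (by fun_prop) (by fun_prop), integral_add (by fun_prop) (by fun_prop),
    integral_const_mul, integral_const_mul, integral_dotProduct_mulVec_self_mul,
    integral_dotProduct_mulVec_self, integral_dotProduct_mulVec_self]
  simp
  ring

lemma hasDerivAt_add_mul_add_sq_mul {g : ℝ → ℝ} (hg : DifferentiableAt ℝ g 0) (a b : ℝ) :
    HasDerivAt (fun t => a + t * b + t ^ 2 * g t) b 0 := by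
  simpa using (((hasDerivAt_id 0).mul_const b).const_add a).fun_add
    ((hasDerivAt_pow 2 0).fun_mul hg.hasDerivAt)

theorem LinearMap.BilinForm.hasDerivAt_apply_quadratic_path {E : Type*} [AddCommGroup E]
    [Module ℝ E] (Q : LinearMap.BilinForm ℝ E) (x₀ x₁ x₂ : E) :
    HasDerivAt (fun t : ℝ => Q (x₀ + t • x₁ + t ^ 2 • x₂) (x₀ + t • x₁ + t ^ 2 • x₂))
      (Q x₀ x₁ + Q x₁ x₀) 0 := by
  have hexp : (fun t : ℝ => Q (x₀ + t • x₁ + t ^ 2 • x₂) (x₀ + t • x₁ + t ^ 2 • x₂)) =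
      fun t => Q x₀ x₀ + t * (Q x₀ x₁ + Q x₁ x₀) + t ^ 2 * (Q x₀ x₂ + Q x₂ x₀ + Q x₁ x₁ +
        t * (Q x₁ x₂ + Q x₂ x₁) + t ^ 2 * Q x₂ x₂) := by
    ext t
    simp only [map_add, map_smul, LinearMap.add_apply, LinearMap.smul_apply, smul_eq_mul]
    ring
  rw [hexp]
  exact hasDerivAt_add_mul_add_sq_mul (by fun_prop) _ _

section Risk

variable {n κ : Type*} [Fintype n] [Fintype κ]

noncomputable def gaussianRisk (B : Matrix n n ℝ) (b₀ : ℝ) (W : Matrix n κ ℝ) (c : ℝ) : ℝ :=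
  gaussianMomentForm n (B - W * Wᵀ, b₀ - c) (B - W * Wᵀ, b₀ - c)

theorem integral_sq_eq_gaussianRisk {d : ℕ} (B : Matrix (Fin d) (Fin d) ℝ) (b₀ : ℝ)
    (W : Matrix (Fin d) κ ℝ) (c : ℝ) :
    ∫ x, (x ⬝ᵥ ((B - W * Wᵀ) *ᵥ x) + b₀ - c) ^ 2 ∂stdGaussian d = gaussianRisk B b₀ W c := by
  simp_rw [add_sub_assoc, sq]
  exact integral_mul_eq_gaussianMomentForm _ _ _ _

theorem hasDerivAt_gaussianRisk_line {B : Matrix n n ℝ} (hB : B.IsSymm) (b₀ : ℝ)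
    (W Z : Matrix n κ ℝ) (c h : ℝ) :
    HasDerivAt (fun t => gaussianRisk B b₀ (W + t • Z) (c + t * h))
      (-2 * ((B - W * Wᵀ).trace + b₀ - c) * (2 * (Zᵀ * W).trace + h) -
        8 * (Zᵀ * ((B - W * Wᵀ) * W)).trace) 0 := by
  have hline (t : ℝ) : (B - (W + t • Z) * (W + t • Z)ᵀ, b₀ - (c + t * h)) =
      (B - W * Wᵀ, b₀ - c) + t • (-(Z * Wᵀ + W * Zᵀ), -h) + t ^ 2 • (-(Z * Zᵀ), 0) := by
    ext : 1
    · simp only [transpose_add, transpose_smul, Matrix.add_mul, Matrix.mul_add, Matrix.smul_mul,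
        Matrix.mul_smul, Prod.fst_add, Prod.smul_fst]
      module
    · simp only [Prod.snd_add, Prod.smul_snd, smul_eq_mul]
      ring
  simp only [gaussianRisk, hline]
  convert (gaussianMomentForm n).hasDerivAt_apply_quadratic_path _ _ _ using 1
  set A := B - W * Wᵀ with hAdef
  set M := Z * Wᵀ + W * Zᵀ with hMdef
  have hA : Aᵀ = A := by simp [hAdef, hB.eq]
  have hM : Mᵀ = M := by simp [hMdef, add_comm]
  have htrM : M.trace = 2 * (Zᵀ * W).trace := by
    rw [hMdef, trace_add, trace_mul_comm W, ← trace_transpose_mul Z, transpose_transpose]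
    ring
  have htrAM : (A * M).trace = 2 * (Zᵀ * (A * W)).trace := by
    rw [hMdef, Matrix.mul_add, trace_add, ← Matrix.mul_assoc, ← Matrix.mul_assoc,
      trace_mul_comm (A * W), ← trace_transpose_mul (A * Z), transpose_mul, hA,
      transpose_transpose, Matrix.mul_assoc]
    ring
  simp only [gaussianMomentForm_apply, transpose_neg, hM, hA, trace_neg, Matrix.mul_neg,
    Matrix.neg_mul, trace_mul_comm M A, htrM, htrAM]
  ring

end Risk

section Projection

variable {n 𝕜 : Type*} [Fintype n] [DecidableEq n] [RCLike 𝕜]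

/-- The witnesses are `P = Γ Γ⁺` and `X = Γ⁺` for `Γ⁺ = U diag(λ⁻¹) Uᴴ`: since `0⁻¹ = 0`, the
product `λ λ⁻¹` is the indicator of `λ ≠ 0`. -/
theorem Matrix.IsHermitian.exists_projection_onto_range {Γ : Matrix n n 𝕜}
    (hΓ : Γ.IsHermitian) :
    ∃ P X : Matrix n n 𝕜, P.IsHermitian ∧ IsIdempotentElem P ∧ P * Γ = Γ ∧ Γ * X = P := by
  set φ := Unitary.conjStarAlgAut 𝕜 _ hΓ.eigenvectorUnitary
  set D : n → 𝕜 := RCLike.ofReal ∘ hΓ.eigenvalues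
  have hΓD : Γ = φ (diagonal D) := hΓ.spectral_theorem
  refine ⟨φ (diagonal (D * D⁻¹)), φ (diagonal D⁻¹), ?_, ?_, ?_, ?_⟩
  · rw [IsHermitian, ← star_eq_conjTranspose, ← map_star, star_eq_conjTranspose,
      diagonal_conjTranspose]
    congr 2; ext i; simp [D]
  · rw [IsIdempotentElem, ← map_mul, diagonal_mul_diagonal]
    congr 2; ext i; by_cases h : D i = 0 <;> simp [h]
  · rw [hΓD, ← map_mul, diagonal_mul_diagonal]
    congr 2; ext i; exact mul_inv_mul_cancel (D i)
  · rw [hΓD, ← map_mul, diagonal_mul_diagonal]; rfl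

theorem Matrix.IsHermitian.exists_projection_of_mul_eq_mul_self {B Γ : Matrix n n 𝕜}
    (hB : B.IsHermitian) (hΓ : Γ.IsHermitian) (hBΓ : B * Γ = Γ * Γ) :
    ∃ P : Matrix n n 𝕜, P.IsHermitian ∧ IsIdempotentElem P ∧ B * P = P * B ∧ Γ = P * B * P := by
  obtain ⟨P, X, hP, hPP, hPΓ, hΓX⟩ := hΓ.exists_projection_onto_range
  have hΓP : Γ * P = Γ := by
    rw [← hP.eq, ← hΓ.eq, ← conjTranspose_mul, hPΓ]
  have hBP : B * P = Γ := by
    rw [← hΓX, ← mul_assoc, hBΓ, mul_assoc, hΓX, hΓP]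
  have hPB : P * B = Γ := by
    rw [← hP.eq, ← hB.eq, ← conjTranspose_mul, hBP, hΓ.eq]
  exact ⟨P, hP, hPP, hBP.trans hPB.symm, by rw [mul_assoc, hBP, hPΓ]⟩

end Projection

/-- at any critical point `(W₀, c₀)` of the population risk
`L(W,c) = E[(⟨xxᵀ, B - WWᵀ⟩ + b₀ - c)²]` (criticality expressed via vanishing
directional derivatives), one has `B W₀ = W₀W₀ᵀW₀`, `c₀ = b₀ + Tr(B - W₀W₀ᵀ)`,
and `W₀W₀ᵀ = P B P` for an orthogonal projection `P` commuting with `B`. -/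
theorem stmt_14 (d N : ℕ) (B : Matrix (Fin d) (Fin d) ℝ) (hB : B.PosSemidef)
    (b₀ : ℝ) (W₀ : Matrix (Fin d) (Fin N) ℝ) (c₀ : ℝ)
    (L : Matrix (Fin d) (Fin N) ℝ → ℝ → ℝ)
    (hL : ∀ W c, L W c =
      ∫ x, (x ⬝ᵥ ((B - W * Wᵀ) *ᵥ x) + b₀ - c) ^ 2 ∂(stdGaussian d))
    (hcrit : ∀ (Z : Matrix (Fin d) (Fin N) ℝ) (h : ℝ),
      deriv (fun t : ℝ => L (W₀ + t • Z) (c₀ + t * h)) 0 = 0) :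
    B * W₀ = W₀ * W₀ᵀ * W₀ ∧
    c₀ = b₀ + (B - W₀ * W₀ᵀ).trace ∧
    ∃ P : Matrix (Fin d) (Fin d) ℝ,
      P.IsSymm ∧ P * P = P ∧ B * P = P * B ∧ W₀ * W₀ᵀ = P * B * P := by
  simp only [hL, integral_sq_eq_gaussianRisk] at hcrit
  have hgrad (Z : Matrix (Fin d) (Fin N) ℝ) (h : ℝ) :=
    (hasDerivAt_gaussianRisk_line (isHermitian_iff_isSymm.1 hB.isHermitian) b₀ W₀ Z c₀ h).deriv
      |>.symm.trans (hcrit Z h)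
  have hc : (B - W₀ * W₀ᵀ).trace + b₀ - c₀ = 0 := by simpa using hgrad 0 1
  have hAW : (B - W₀ * W₀ᵀ) * W₀ = 0 := by
    have h := hgrad ((B - W₀ * W₀ᵀ) * W₀) 0
    rw [hc] at h
    exact trace_conjTranspose_mul_self_eq_zero_iff.1 (by simpa using h)
  have hBW : B * W₀ = W₀ * W₀ᵀ * W₀ := by rwa [Matrix.sub_mul, sub_eq_zero] at hAW
  have hΓ : (W₀ * W₀ᵀ).IsHermitian := by simpa using isHermitian_mul_conjTranspose_self W₀
  obtain ⟨P, hP, hPP, hBP, hΓP⟩ := hB.isHermitian.exists_projection_of_mul_eq_mul_self hΓ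
    (by rw [← Matrix.mul_assoc, hBW, Matrix.mul_assoc])
  exact ⟨hBW, by linarith, P, isHermitian_iff_isSymm.1 hP, hPP, hBP, hΓP⟩
end
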